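/- Let n ∈ ℕ and let w_1,…,w_n be positive integers with Σ_{κ=1}^n w_κ = 2W. For s ∈ {−1,1}^n define U(s) := {u ∈ ℝ^{2n+3} : 0 ≤ u_i ≤ 1 for i ≤ n, u_{n+i} = u_i − 1/2 for i ≤ n, 0 ≤ u_{2n+1} ≤ 1, −1 ≤ u_{2n+2} ≤ 1, u_{2n+3} = 1/2, and additionally u_κ ≥ 1/2 whenever s_κ = 1 and u_κ ≤ 1/2 whenever s_κ = −1 for κ ≤ n}. Let x¹ := (w_1,…,w_n, 0,…,0, −W, 0, 0) and x² := (0,…,0, −w_1,…,−w_n, W, 2W, 0) in ℝ^{2n+3}, let R := {x¹, x²}, and define Z(s) := max_{x∈R} min_{u∈U(s)} min_{x'∈R} u·(x − x'). Then for every s ∈ {−1,1}^n, Z(s) = max( Σ_{κ: s_κ=1} w_κ − W, W − Σ_{κ: s_κ=1} w_κ ) − 4W ≥ −4W, and min_{s∈{−1,1}^n} Z(s) = −4W if and only if there exists a subset X ⊆ {1,…,n} with Σ_{κ∈X} w_κ = W. -/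

import Mathlib

open scoped BigOperators

noncomputable section

/-- Index type for `ℝ^{2n+3}`: the first `n` coordinates, the second `n` coordinates,
and the last three coordinates. -/
abbrev IdxR (n : ℕ) := Fin n ⊕ Fin n ⊕ Fin 3

/-- The uncertainty set `U(s)` of the Partition reduction for the min-max regret problem. -/
def UpartR {n : ℕ} (s : Fin n → ℤ) : Set (IdxR n → ℝ) :=
  {u | (∀ i : Fin n, 0 ≤ u (Sum.inl i) ∧ u (Sum.inl i) ≤ 1) ∧
    (∀ i : Fin n, u (Sum.inr (Sum.inl i)) = u (Sum.inl i) - 1 / 2) ∧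
    (0 ≤ u (Sum.inr (Sum.inr 0)) ∧ u (Sum.inr (Sum.inr 0)) ≤ 1) ∧
    (-1 ≤ u (Sum.inr (Sum.inr 1)) ∧ u (Sum.inr (Sum.inr 1)) ≤ 1) ∧
    u (Sum.inr (Sum.inr 2)) = 1 / 2 ∧
    (∀ κ : Fin n, s κ = 1 → 1 / 2 ≤ u (Sum.inl κ)) ∧
    (∀ κ : Fin n, s κ = -1 → u (Sum.inl κ) ≤ 1 / 2)}

/-- The first item `x¹ = (w₁,…,wₙ,0,…,0,−W,0,0)` of the Partition reduction. -/
def xOneR {n : ℕ} (w : Fin n → ℕ) (W : ℕ) : IdxR n → ℝ :=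
  Sum.elim (fun i => (w i : ℝ)) (Sum.elim (fun _ => 0) ![-(W : ℝ), 0, 0])

/-- The second item `x² = (0,…,0,−w₁,…,−wₙ,W,2W,0)` of the Partition reduction. -/
def xTwoR {n : ℕ} (w : Fin n → ℕ) (W : ℕ) : IdxR n → ℝ :=
  Sum.elim (fun _ => 0) (Sum.elim (fun i => -(w i : ℝ)) ![(W : ℝ), 2 * W, 0])

/-- `Z(s) = max_{x∈R} min_{u∈U(s)} min_{x'∈R} u·(x − x')`, the negative of the worst-case
regret of the best recommendation from `R = {x¹, x²}` under response scenario `s`. -/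
def Zreg {n : ℕ} (w : Fin n → ℕ) (W : ℕ) (s : Fin n → ℤ) : EReal :=
  ⨆ x ∈ ({xOneR w W, xTwoR w W} : Set (IdxR n → ℝ)),
    ⨅ u ∈ UpartR s, ⨅ x' ∈ ({xOneR w W, xTwoR w W} : Set (IdxR n → ℝ)),
      (((∑ j, u j * x j) - ∑ j, u j * x' j : ℝ) : EReal)

/-!
On `U(s)` the linking constraints `u_{n+i} = u_i - 1/2` and `∑ w = 2W` turn the utility gap
`u·x¹ - u·x²` into `2 ∑ u_i w_i - W - 2W (u_{2n+1} + u_{2n+2})`. With `A` the weight of the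
items answered positively, this gap ranges exactly over `[A - 5W, A + 3W]`: the extremes are
attained where every `u_i` sits at its lower, resp. upper, bound. Hence
`Z(s) = max (A - 5W) (-A - 3W) = |A - W| - 4W`. As `A` is an integer, `Z(s) = -4W` exactly
when `A = W`, and otherwise `Z(s) ≥ 1 - 4W`, so the minimum detects a partition.
-/

section

variable {n : ℕ}

def posWeight (w : Fin n → ℕ) (s : Fin n → ℤ) : ℝ :=
  ∑ κ ∈ Finset.univ.filter fun κ => s κ = 1, (w κ : ℝ)

def IsSignVector (s : Fin n → ℤ) : Prop := ∀ κ, s κ = -1 ∨ s κ = 1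

/-- The least value of `u_κ` on `U(s)`; the greatest is `1/2` more. -/
def lowerResponse (s : Fin n → ℤ) (κ : Fin n) : ℝ := if s κ = 1 then 1 / 2 else 0

/-- The coordinates other than `v`, `a`, `b` are those forced by the equations of `U(s)`. -/
def liftPoint (v : Fin n → ℝ) (a b : ℝ) : IdxR n → ℝ :=
  Sum.elim v (Sum.elim (fun i => v i - 1 / 2) ![a, b, 1 / 2])

lemma liftPoint_mem_UpartR {s : Fin n → ℤ} {v : Fin n → ℝ} {a b : ℝ}
    (hv : ∀ i, 0 ≤ v i ∧ v i ≤ 1) (hpos : ∀ κ, s κ = 1 → 1 / 2 ≤ v κ)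
    (hneg : ∀ κ, s κ = -1 → v κ ≤ 1 / 2) (ha : 0 ≤ a ∧ a ≤ 1) (hb : -1 ≤ b ∧ b ≤ 1) :
    liftPoint v a b ∈ UpartR s :=
  ⟨hv, fun _ => rfl, ha, hb, rfl, hpos, hneg⟩

lemma dotProduct_xOneR_sub_xTwoR (w : Fin n → ℕ) (W : ℕ) {u : IdxR n → ℝ}
    (hlink : ∀ i, u (Sum.inr (Sum.inl i)) = u (Sum.inl i) - 1 / 2) :
    u ⬝ᵥ xOneR w W - u ⬝ᵥ xTwoR w W
      = 2 * ∑ i, u (Sum.inl i) * w i - (∑ i, (w i : ℝ)) / 2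
        - 2 * W * (u (Sum.inr (Sum.inr 0)) + u (Sum.inr (Sum.inr 1))) := by
  simp only [dotProduct, xOneR, xTwoR, Fintype.sum_sum_type, Fin.sum_univ_three, Sum.elim_inl,
    Sum.elim_inr, hlink, Matrix.cons_val_zero, Matrix.cons_val_one, Matrix.cons_val_two,
    Matrix.head_cons, Matrix.tail_cons, mul_zero, Finset.sum_const_zero, mul_neg, sub_mul,
    Finset.sum_neg_distrib, Finset.sum_sub_distrib, ← Finset.mul_sum]
  ring

lemma lowerResponse_nonneg (s : Fin n → ℤ) (κ : Fin n) : 0 ≤ lowerResponse s κ := by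
  unfold lowerResponse; split_ifs <;> norm_num

lemma lowerResponse_le_half (s : Fin n → ℤ) (κ : Fin n) : lowerResponse s κ ≤ 1 / 2 := by
  unfold lowerResponse; split_ifs <;> norm_num

lemma apply_inl_mem_Icc_lowerResponse {s : Fin n → ℤ} (hs : IsSignVector s)
    {u : IdxR n → ℝ} (hu : u ∈ UpartR s) (κ : Fin n) :
    u (Sum.inl κ) ∈ Set.Icc (lowerResponse s κ) (lowerResponse s κ + 1 / 2) := by
  obtain ⟨hbox, -, -, -, -, hpos, hneg⟩ := hu
  unfold lowerResponse
  rcases hs κ with h | h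
  · rw [if_neg (by rw [h]; decide)]
    exact ⟨(hbox κ).1, by linarith [hneg κ h]⟩
  · rw [if_pos h]
    exact ⟨hpos κ h, by linarith [(hbox κ).2]⟩

lemma sum_lowerResponse_mul (w : Fin n → ℕ) (s : Fin n → ℤ) :
    ∑ κ, lowerResponse s κ * w κ = posWeight w s / 2 := by
  simp only [lowerResponse, posWeight, ite_mul, zero_mul, ← Finset.sum_filter, Finset.sum_div]
  exact Finset.sum_congr rfl fun _ _ => by ring

lemma posWeight_nonneg (w : Fin n → ℕ) (s : Fin n → ℤ) : 0 ≤ posWeight w s :=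
  Finset.sum_nonneg fun _ _ => Nat.cast_nonneg _

lemma posWeight_le_sum (w : Fin n → ℕ) (s : Fin n → ℤ) : posWeight w s ≤ ∑ κ, (w κ : ℝ) :=
  Finset.sum_le_sum_of_subset_of_nonneg (Finset.filter_subset _ _)
    fun _ _ _ => Nat.cast_nonneg _

def utilityGap (w : Fin n → ℕ) (W : ℕ) (u : IdxR n → ℝ) : ℝ :=
  u ⬝ᵥ xOneR w W - u ⬝ᵥ xTwoR w W

section

variable {w : Fin n → ℕ} {W : ℕ} {s : Fin n → ℤ}

lemma posWeight_div_two_le_sum_mul (hW : ∑ κ, (w κ : ℝ) = 2 * W) (hs : IsSignVector s)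
    {u : IdxR n → ℝ} (hu : u ∈ UpartR s) :
    posWeight w s / 2 ≤ ∑ κ, u (Sum.inl κ) * w κ ∧
      ∑ κ, u (Sum.inl κ) * w κ ≤ posWeight w s / 2 + W := by
  rw [← sum_lowerResponse_mul]
  constructor
  · exact Finset.sum_le_sum fun κ _ =>
      mul_le_mul_of_nonneg_right (apply_inl_mem_Icc_lowerResponse hs hu κ).1 (Nat.cast_nonneg _)
  · calc ∑ κ, u (Sum.inl κ) * w κ ≤ ∑ κ, (lowerResponse s κ + 1 / 2) * w κ :=
          Finset.sum_le_sum fun κ _ =>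
            mul_le_mul_of_nonneg_right (apply_inl_mem_Icc_lowerResponse hs hu κ).2 (Nat.cast_nonneg _)
      _ = ∑ κ, lowerResponse s κ * w κ + W := by
          simp only [add_mul, Finset.sum_add_distrib, ← Finset.mul_sum, hW]
          ring

lemma utilityGap_mem_Icc (hW : ∑ κ, (w κ : ℝ) = 2 * W) (hs : IsSignVector s)
    {u : IdxR n → ℝ} (hu : u ∈ UpartR s) :
    posWeight w s - 5 * W ≤ utilityGap w W u ∧ utilityGap w W u ≤ posWeight w s + 3 * W := by
  have hT := posWeight_div_two_le_sum_mul hW hs hu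
  obtain ⟨-, hlink, ha, hb, -⟩ := hu
  have hW0 : (0 : ℝ) ≤ W := Nat.cast_nonneg W
  rw [utilityGap, dotProduct_xOneR_sub_xTwoR w W hlink, hW]
  constructor <;> linarith [mul_le_mul_of_nonneg_left ha.2 hW0, mul_le_mul_of_nonneg_left hb.2 hW0,
    mul_le_mul_of_nonneg_left ha.1 hW0, mul_le_mul_of_nonneg_left hb.1 hW0]

lemma liftPoint_lowerResponse_mem (s : Fin n → ℤ) :
    liftPoint (lowerResponse s) 1 1 ∈ UpartR s :=
  liftPoint_mem_UpartR
    (fun κ => ⟨lowerResponse_nonneg s κ, (lowerResponse_le_half s κ).trans (by norm_num)⟩)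
    (fun κ h => by rw [lowerResponse, if_pos h]) (fun κ _ => lowerResponse_le_half s κ)
    (by norm_num) (by norm_num)

lemma liftPoint_upperResponse_mem (s : Fin n → ℤ) :
    liftPoint (fun κ => lowerResponse s κ + 1 / 2) 0 (-1) ∈ UpartR s :=
  liftPoint_mem_UpartR
    (fun κ => ⟨by linarith [lowerResponse_nonneg s κ], by linarith [lowerResponse_le_half s κ]⟩)
    (fun κ _ => by linarith [lowerResponse_nonneg s κ])
    (fun κ h => by rw [lowerResponse, if_neg (by rw [h]; decide)]; norm_num)
    (by norm_num) (by norm_num)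

lemma utilityGap_liftPoint_lowerResponse (hW : ∑ κ, (w κ : ℝ) = 2 * W) :
    utilityGap w W (liftPoint (lowerResponse s) 1 1) = posWeight w s - 5 * W := by
  rw [utilityGap, dotProduct_xOneR_sub_xTwoR w W (liftPoint_lowerResponse_mem s).2.1, hW]
  simp only [liftPoint, Sum.elim_inl, Sum.elim_inr, sum_lowerResponse_mul,
    Matrix.cons_val_zero, Matrix.cons_val_one]
  ring

lemma utilityGap_liftPoint_upperResponse (hW : ∑ κ, (w κ : ℝ) = 2 * W) :
    utilityGap w W (liftPoint (fun κ => lowerResponse s κ + 1 / 2) 0 (-1))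
      = posWeight w s + 3 * W := by
  rw [utilityGap, dotProduct_xOneR_sub_xTwoR w W (liftPoint_upperResponse_mem s).2.1, hW]
  simp only [liftPoint, Sum.elim_inl, Sum.elim_inr, add_mul, Finset.sum_add_distrib,
    sum_lowerResponse_mul, ← Finset.mul_sum, hW, Matrix.cons_val_zero, Matrix.cons_val_one]
  ring

lemma biInf_coe_eq_of_isLeast {α : Type*} {U : Set α} {f : α → ℝ} {m : ℝ}
    (h : IsLeast (f '' U) m) : ⨅ u ∈ U, (f u : EReal) = m := by
  obtain ⟨⟨u₀, hu₀, rfl⟩, hle⟩ := h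
  exact le_antisymm (iInf₂_le u₀ hu₀)
    (le_iInf₂ fun u hu => EReal.coe_le_coe_iff.2 (hle ⟨u, hu, rfl⟩))

lemma biInf_pair_dotProduct_sub (u x₁ x₂ x : IdxR n → ℝ) :
    ⨅ x' ∈ ({x₁, x₂} : Set (IdxR n → ℝ)), ((u ⬝ᵥ x - u ⬝ᵥ x' : ℝ) : EReal)
      = ((min (u ⬝ᵥ x - u ⬝ᵥ x₁) (u ⬝ᵥ x - u ⬝ᵥ x₂) : ℝ) : EReal) := by
  rw [iInf_pair, EReal.coe_strictMono.monotone.map_min]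

lemma biInf_regret_xOneR (hW : ∑ κ, (w κ : ℝ) = 2 * W) (hs : IsSignVector s) :
    ⨅ u ∈ UpartR s, ⨅ x' ∈ ({xOneR w W, xTwoR w W} : Set (IdxR n → ℝ)),
        ((u ⬝ᵥ xOneR w W - u ⬝ᵥ x' : ℝ) : EReal) = ((posWeight w s - 5 * W : ℝ) : EReal) := by
  have hA : posWeight w s ≤ 2 * W := hW ▸ posWeight_le_sum w s
  simp only [biInf_pair_dotProduct_sub, sub_self, ← utilityGap.eq_1]
  refine biInf_coe_eq_of_isLeast ⟨⟨_, liftPoint_lowerResponse_mem s, ?_⟩, ?_⟩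
  · dsimp only
    rw [utilityGap_liftPoint_lowerResponse hW]
    exact min_eq_right (by linarith)
  · rintro _ ⟨u, hu, rfl⟩
    exact le_min (by linarith) (utilityGap_mem_Icc hW hs hu).1

lemma biInf_regret_xTwoR (hW : ∑ κ, (w κ : ℝ) = 2 * W) (hs : IsSignVector s) :
    ⨅ u ∈ UpartR s, ⨅ x' ∈ ({xOneR w W, xTwoR w W} : Set (IdxR n → ℝ)),
        ((u ⬝ᵥ xTwoR w W - u ⬝ᵥ x' : ℝ) : EReal) = ((-posWeight w s - 3 * W : ℝ) : EReal) := by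
  have hA := posWeight_nonneg w s
  have hW0 : (0 : ℝ) ≤ W := Nat.cast_nonneg W
  have hswap (u : IdxR n → ℝ) : u ⬝ᵥ xTwoR w W - u ⬝ᵥ xOneR w W = -utilityGap w W u :=
    (neg_sub _ _).symm
  simp only [biInf_pair_dotProduct_sub, sub_self, hswap]
  refine biInf_coe_eq_of_isLeast ⟨⟨_, liftPoint_upperResponse_mem s, ?_⟩, ?_⟩
  · dsimp only
    rw [utilityGap_liftPoint_upperResponse hW, min_eq_left (by linarith)]
    ring
  · rintro _ ⟨u, hu, rfl⟩
    exact le_min (by linarith [(utilityGap_mem_Icc hW hs hu).2]) (by linarith)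

lemma Zreg_eq_max (hW : ∑ κ, (w κ : ℝ) = 2 * W) (hs : IsSignVector s) :
    Zreg w W s = ((max (posWeight w s - W) (W - posWeight w s) - 4 * W : ℝ) : EReal) := by
  change ⨆ x ∈ ({xOneR w W, xTwoR w W} : Set (IdxR n → ℝ)), ⨅ u ∈ UpartR s,
    ⨅ x' ∈ ({xOneR w W, xTwoR w W} : Set (IdxR n → ℝ)), ((u ⬝ᵥ x - u ⬝ᵥ x' : ℝ) : EReal) = _
  rw [iSup_pair, biInf_regret_xOneR hW hs, biInf_regret_xTwoR hW hs,
    ← EReal.coe_strictMono.monotone.map_max, ← max_sub_sub_right]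
  congr 2 <;> ring

lemma one_le_max_sub_sub_of_ne {a b : ℕ} (h : a ≠ b) : (1 : ℝ) ≤ max ((a : ℝ) - b) (b - a) := by
  rcases h.lt_or_gt with h | h
  · have h' : (a : ℝ) + 1 ≤ b := by exact_mod_cast h
    exact le_max_of_le_right (by linarith)
  · have h' : (b : ℝ) + 1 ≤ a := by exact_mod_cast h
    exact le_max_of_le_left (by linarith)

lemma neg_four_mul_le_Zreg (hW : ∑ κ, (w κ : ℝ) = 2 * W) (hs : IsSignVector s) :
    ((-(4 * (W : ℝ)) : ℝ) : EReal) ≤ Zreg w W s := by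
  rw [Zreg_eq_max hW hs, EReal.coe_le_coe_iff]
  linarith [le_max_left (posWeight w s - W) (W - posWeight w s),
    le_max_right (posWeight w s - W) (W - posWeight w s)]

lemma one_sub_four_mul_le_Zreg (hW : ∑ κ, (w κ : ℝ) = 2 * W) (hs : IsSignVector s)
    (hX : ∀ X : Finset (Fin n), ∑ κ ∈ X, w κ ≠ W) :
    ((1 - 4 * W : ℝ) : EReal) ≤ Zreg w W s := by
  rw [Zreg_eq_max hW hs, EReal.coe_le_coe_iff, posWeight, ← Nat.cast_sum]
  linarith [one_le_max_sub_sub_of_ne (hX (Finset.univ.filter fun κ => s κ = 1))]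

end

def signOf (X : Finset (Fin n)) (κ : Fin n) : ℤ := if κ ∈ X then 1 else -1

lemma isSignVector_signOf (X : Finset (Fin n)) : IsSignVector (signOf X) := fun κ => by
  unfold signOf; split_ifs <;> simp

lemma posWeight_signOf (w : Fin n → ℕ) (X : Finset (Fin n)) :
    posWeight w (signOf X) = ∑ κ ∈ X, (w κ : ℝ) := by
  unfold posWeight signOf
  congr 1
  ext κ
  by_cases h : κ ∈ X <;> simp [h]

end

theorem offline_mmr_partition_reduction_general
    {n : ℕ} (w : Fin n → ℕ) (W : ℕ)
    (hW : ∑ κ, w κ = 2 * W) :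
    (∀ s : Fin n → ℤ, (∀ κ, s κ = -1 ∨ s κ = 1) →
        Zreg w W s
          = ((max ((∑ κ ∈ Finset.univ.filter fun κ => s κ = 1, (w κ : ℝ)) - W)
                ((W : ℝ) - ∑ κ ∈ Finset.univ.filter fun κ => s κ = 1, (w κ : ℝ))
              - 4 * W : ℝ) : EReal) ∧
        ((-(4 * (W : ℝ)) : ℝ) : EReal) ≤ Zreg w W s) ∧
      ((⨅ s ∈ {s : Fin n → ℤ | ∀ κ, s κ = -1 ∨ s κ = 1}, Zreg w W s)
          = ((-(4 * (W : ℝ)) : ℝ) : EReal)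
        ↔ ∃ X : Finset (Fin n), ∑ κ ∈ X, w κ = W) := by
  have hWr : ∑ κ, (w κ : ℝ) = 2 * W := by exact_mod_cast hW
  refine ⟨fun s hs => ⟨Zreg_eq_max hWr hs, neg_four_mul_le_Zreg hWr hs⟩, fun hinf => ?_, ?_⟩
  · by_contra! hX
    have hle : ((1 - 4 * W : ℝ) : EReal) ≤ ((-(4 * (W : ℝ)) : ℝ) : EReal) :=
      hinf ▸ le_iInf₂ fun s hs => one_sub_four_mul_le_Zreg hWr hs hX
    linarith [EReal.coe_le_coe_iff.1 hle]
  · rintro ⟨X, hX⟩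
    refine le_antisymm (iInf₂_le_of_le (signOf X) (isSignVector_signOf X) ?_)
      (le_iInf₂ fun s hs => neg_four_mul_le_Zreg hWr hs)
    rw [Zreg_eq_max hWr (isSignVector_signOf X), posWeight_signOf, ← Nat.cast_sum, hX]
    simp

theorem offline_mmr_partition_reduction
    {n : ℕ} (w : Fin n → ℕ) (hw : ∀ κ, 0 < w κ) (W : ℕ)
    (hW : ∑ κ, w κ = 2 * W) :
    (∀ s : Fin n → ℤ, (∀ κ, s κ = -1 ∨ s κ = 1) →
        Zreg w W s
          = ((max ((∑ κ ∈ Finset.univ.filter fun κ => s κ = 1, (w κ : ℝ)) - W)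
                ((W : ℝ) - ∑ κ ∈ Finset.univ.filter fun κ => s κ = 1, (w κ : ℝ))
              - 4 * W : ℝ) : EReal) ∧
        ((-(4 * (W : ℝ)) : ℝ) : EReal) ≤ Zreg w W s) ∧
      ((⨅ s ∈ {s : Fin n → ℤ | ∀ κ, s κ = -1 ∨ s κ = 1}, Zreg w W s)
          = ((-(4 * (W : ℝ)) : ℝ) : EReal)
        ↔ ∃ X : Finset (Fin n), ∑ κ ∈ X, w κ = W) :=
  offline_mmr_partition_reduction_general w W hW
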